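/- arXiv:2002.06455 — 5 statements merged into one kernel-verified Lean document; each statement's English description precedes it below -/
import Mathlib

section
/- For every positive integer n and every real (or formal) variable s, the sum over multi-indices J with deg(J) = n of s^{|J|}/(prod_u J(u)! u^{J(u)}) equals prod_{k=1}^n ((1/k)·s + (k-1)/k), which also equals binomial(s + n - 1, n) = (1/n!)·prod_{k=1}^n (s + k - 1). -/
/-!
Let `S(m)` be the sum over multi-indices of weighted degree `m`. Multiplying the term of `J` by
`deg J = ∑ u, u J(u)` and removing one part of size `u` (the bijection `J ↦ J - e_u` onto
multi-indices of degree `m - u`, which turns `u J(u) · term J` into `s · term (J - e_u)`) gives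
`m S(m) = s ∑_{k<m} S(k)` as long as every part size up to `m` is available. Subtracting
consecutive instances, `(m+1) S(m+1) = (s+m) S(m)`, so `S(n) = ∏_{k<n} (s+k)/(k+1)`.
-/

open Finset

/-- The finset of multi-indices `J = (J(1),...,J(n))` (encoded as functions `Fin n → ℕ`,
where the index `u : Fin n` represents the integer `u+1`) of degree
`deg J = ∑_{u=1}^n u * J(u) = n`. -/
def MIdeg (n : ℕ) : Finset (Fin n → ℕ) :=
  (Fintype.piFinset fun _ => Finset.range (n + 1)).filter fun J => ∑ u, (u.1 + 1) * J u = n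

namespace MultiIndex

variable {N : ℕ}

def weightedDegree (J : Fin N → ℕ) : ℕ := ∑ u, (u.1 + 1) * J u

lemma weightedDegree_add (J J' : Fin N → ℕ) :
    weightedDegree (J + J') = weightedDegree J + weightedDegree J' := by
  simp only [weightedDegree, Pi.add_apply, mul_add, sum_add_distrib]

lemma weightedDegree_single (u : Fin N) : weightedDegree (Pi.single u 1) = u.1 + 1 := by
  simp [weightedDegree, Pi.single_apply]

lemma mul_apply_le_weightedDegree (J : Fin N → ℕ) (u : Fin N) :
    (u.1 + 1) * J u ≤ weightedDegree J :=
  single_le_sum (f := fun v : Fin N => (v.1 + 1) * J v) (fun _ _ => Nat.zero_le _) (mem_univ u)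

lemma eq_zero_of_weightedDegree_lt {J : Fin N → ℕ} {u : Fin N}
    (h : weightedDegree J < u.1 + 1) : J u = 0 := by
  by_contra hu
  have := mul_apply_le_weightedDegree J u
  have := Nat.le_mul_of_pos_right (u.1 + 1) (Nat.pos_of_ne_zero hu)
  omega

def ofWeightedDegree (N m : ℕ) : Finset (Fin N → ℕ) :=
  (Fintype.piFinset fun _ => range (m + 1)).filter fun J => weightedDegree J = m

lemma mem_ofWeightedDegree {m : ℕ} {J : Fin N → ℕ} :
    J ∈ ofWeightedDegree N m ↔ weightedDegree J = m := by
  simp only [ofWeightedDegree, mem_filter, Fintype.mem_piFinset, mem_range, and_iff_right_iff_imp]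
  rintro rfl u
  have := mul_apply_le_weightedDegree J u
  have := Nat.le_mul_of_pos_left (J u) (by omega : 0 < u.1 + 1)
  omega

lemma ofWeightedDegree_zero : ofWeightedDegree N 0 = {0} := by
  ext J
  simp only [mem_ofWeightedDegree, mem_singleton, funext_iff, Pi.zero_apply]
  constructor
  · intro h u
    exact eq_zero_of_weightedDegree_lt (h ▸ u.1.succ_pos)
  · intro h
    simp [weightedDegree, h]

variable {K : Type*} [Field K]

def cycleTerm (s : K) (J : Fin N → ℕ) : K :=
  s ^ (∑ u, J u) / ∏ u, ((J u).factorial * (u.1 + 1) ^ (J u) : K)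

def cycleSum (N m : ℕ) (s : K) : K := ∑ J ∈ ofWeightedDegree N m, cycleTerm s J

variable [CharZero K]

lemma cycleTerm_add_single (s : K) (J : Fin N → ℕ) (u : Fin N) :
    ((u.1 + 1) * (J u + 1) : K) * cycleTerm s (J + Pi.single u 1) = s * cycleTerm s J := by
  have hnum : ∑ v, (J + Pi.single u 1 : Fin N → ℕ) v = ∑ v, J v + 1 := by
    simp [sum_add_distrib]
  have hden : ∏ v, (((J + Pi.single u 1 : Fin N → ℕ) v).factorial *
        (v.1 + 1) ^ ((J + Pi.single u 1 : Fin N → ℕ) v) : K)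
      = (∏ v, ((J v).factorial * (v.1 + 1) ^ (J v) : K)) * ((u.1 + 1) * (J u + 1)) := by
    rw [← Fintype.prod_ite_eq' u fun _ => ((u.1 + 1) * (J u + 1) : K), ← prod_mul_distrib]
    refine prod_congr rfl fun v _ => ?_
    by_cases hv : v = u
    · subst hv
      simp only [Pi.add_apply, Pi.single_eq_same, Nat.factorial_succ, Nat.cast_mul, Nat.cast_add,
        Nat.cast_one, pow_succ, ↓reduceIte]
      ring
    · simp [hv]
  rw [cycleTerm, cycleTerm, hnum, hden, pow_succ]
  field_simp

lemma sum_mul_apply_mul_cycleTerm (s : K) (u : Fin N) (k : ℕ) :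
    ∑ J ∈ ofWeightedDegree N (k + (u.1 + 1)), ((u.1 + 1) * J u : K) * cycleTerm s J
      = s * cycleSum N k s := by
  set f := fun J : Fin N → ℕ => ((u.1 + 1) * J u : K) * cycleTerm s J
  have hdeg : ∀ J, weightedDegree (J + Pi.single u 1) = weightedDegree J + (u.1 + 1) :=
    fun J => by rw [weightedDegree_add, weightedDegree_single]
  have himage : (ofWeightedDegree N k).image (· + Pi.single u 1)
      ⊆ ofWeightedDegree N (k + (u.1 + 1)) := by
    simp only [subset_iff, mem_image, mem_ofWeightedDegree]
    rintro _ ⟨J, rfl, rfl⟩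
    exact hdeg J
  have hzero : ∀ J ∈ ofWeightedDegree N (k + (u.1 + 1)),
      J ∉ (ofWeightedDegree N k).image (· + Pi.single u 1) → f J = 0 := by
    intro J hJ hJ'
    suffices J u = 0 by simp [f, this]
    by_contra hu
    have hJ_eq : J - Pi.single u 1 + Pi.single u 1 = J := by
      ext v
      by_cases hv : v = u
      · subst hv
        simp only [Pi.add_apply, Pi.sub_apply, Pi.single_eq_same]
        omega
      · simp [hv]
    refine hJ' (mem_image.2 ⟨J - Pi.single u 1, ?_, hJ_eq⟩)
    rw [mem_ofWeightedDegree] at hJ ⊢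
    have := hdeg (J - Pi.single u 1)
    rw [hJ_eq, hJ] at this
    omega
  calc ∑ J ∈ ofWeightedDegree N (k + (u.1 + 1)), f J
      = ∑ J ∈ (ofWeightedDegree N k).image (· + Pi.single u 1), f J :=
        (sum_subset himage hzero).symm
    _ = ∑ J ∈ ofWeightedDegree N k, f (J + Pi.single u 1) :=
        sum_image fun _ _ _ _ h => add_right_cancel h
    _ = s * cycleSum N k s := by
        rw [cycleSum, mul_sum]
        refine sum_congr rfl fun J _ => ?_
        simpa [f] using cycleTerm_add_single s J u

lemma natCast_mul_cycleSum {m : ℕ} (hm : m ≤ N) (s : K) :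
    (m : K) * cycleSum N m s = s * ∑ k ∈ range m, cycleSum N k s := by
  have hsplit : (m : K) * cycleSum N m s
      = ∑ u : Fin N, ∑ J ∈ ofWeightedDegree N m, ((u.1 + 1) * J u : K) * cycleTerm s J := by
    rw [cycleSum, mul_sum, sum_comm]
    refine sum_congr rfl fun J hJ => ?_
    rw [← sum_mul, ← mem_ofWeightedDegree.1 hJ, weightedDegree]
    push_cast
    rfl
  have hterm : ∀ u : Fin N,
      ∑ J ∈ ofWeightedDegree N m, ((u.1 + 1) * J u : K) * cycleTerm s J
        = if u.1 < m then s * cycleSum N (m - 1 - u.1) s else 0 := by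
    intro u
    split_ifs with hu
    · obtain ⟨k, rfl⟩ : ∃ k, m = k + (u.1 + 1) := ⟨m - (u.1 + 1), by omega⟩
      rw [sum_mul_apply_mul_cycleTerm, show k + (u.1 + 1) - 1 - u.1 = k by omega]
    · refine sum_eq_zero fun J hJ => ?_
      rw [eq_zero_of_weightedDegree_lt (J := J) (u := u) (by rw [mem_ofWeightedDegree.1 hJ]; omega)]
      simp
  have hfilter : (range N).filter (· < m) = range m := by
    ext i
    simp only [mem_filter, mem_range]
    omega
  rw [hsplit, sum_congr rfl fun u _ => hterm u,
    Fin.sum_univ_eq_sum_range (fun i => if i < m then s * cycleSum N (m - 1 - i) s else 0),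
    sum_ite, sum_const_zero, add_zero, hfilter, sum_range_reflect (fun k => s * cycleSum N k s),
    mul_sum]

lemma cycleSum_zero (s : K) : cycleSum N 0 s = 1 := by
  simp [cycleSum, ofWeightedDegree_zero, cycleTerm]

lemma cycleSum_succ {m : ℕ} (hm : m + 1 ≤ N) (s : K) :
    cycleSum N (m + 1) s = (s + m) / (m + 1) * cycleSum N m s := by
  have h₁ := natCast_mul_cycleSum hm s
  have h₀ := natCast_mul_cycleSum (m.le_succ.trans hm) s
  rw [sum_range_succ] at h₁
  push_cast at h₁
  rw [div_mul_eq_mul_div, eq_div_iff (Nat.cast_add_one_ne_zero m)]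
  linear_combination h₁ - h₀

lemma cycleSum_eq_prod {m : ℕ} (hm : m ≤ N) (s : K) :
    cycleSum N m s = ∏ k ∈ range m, (s + k) / (k + 1) := by
  induction m with
  | zero => exact cycleSum_zero s
  | succ m ih => rw [cycleSum_succ hm, prod_range_succ, ih (by omega), mul_comm]

lemma prod_range_add_div_add_one (s : K) (n : ℕ) :
    ∏ k ∈ range n, (s + k) / (k + 1) = 1 / n.factorial * ∏ k ∈ range n, (s + k) := by
  rw [prod_div_distrib, ← prod_range_add_one_eq_factorial]
  push_cast
  ring

end MultiIndex

theorem cycle_counting_generating_function_general (n : ℕ) (s : ℝ) :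
    (∑ J ∈ MIdeg n, s ^ (∑ u, J u) /
        ∏ u : Fin n, ((Nat.factorial (J u)) * (u.1 + 1) ^ (J u) : ℝ)
      = ∏ k ∈ Finset.range n, ((1 / (k + 1 : ℝ)) * s + (k : ℝ) / (k + 1))) ∧
    (∏ k ∈ Finset.range n, ((1 / (k + 1 : ℝ)) * s + (k : ℝ) / (k + 1))
      = (1 / (Nat.factorial n : ℝ)) * ∏ k ∈ Finset.range n, (s + (k : ℝ))) := by
  have hfactor : ∀ k : ℕ, 1 / (k + 1 : ℝ) * s + k / (k + 1) = (s + k) / (k + 1) := fun k => by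
    ring
  simp only [hfactor]
  exact ⟨MultiIndex.cycleSum_eq_prod le_rfl s, MultiIndex.prod_range_add_div_add_one s n⟩

/-- `∑_{deg J = n} s^{|J|} / ∏_u J(u)! u^{J(u)} = ∏_{k=1}^n ((1/k) s + (k-1)/k)
    = (1/n!) ∏_{k=1}^n (s + k - 1)`. -/
theorem cycle_counting_generating_function (n : ℕ) (hn : 1 ≤ n) (s : ℝ) :
    (∑ J ∈ MIdeg n, s ^ (∑ u, J u) /
        ∏ u : Fin n, ((Nat.factorial (J u)) * (u.1 + 1) ^ (J u) : ℝ)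
      = ∏ k ∈ Finset.range n, ((1 / (k + 1 : ℝ)) * s + (k : ℝ) / (k + 1))) ∧
    (∏ k ∈ Finset.range n, ((1 / (k + 1 : ℝ)) * s + (k : ℝ) / (k + 1))
      = (1 / (Nat.factorial n : ℝ)) * ∏ k ∈ Finset.range n, (s + (k : ℝ))) :=
  cycle_counting_generating_function_general n s
end

section
/- On the symmetric group S_n with uniform probability measure, the random variables X_1, ..., X_n defined by X_k(σ) = 1 if σ(k) = k viewed inside S_k after applying the canonical projections (i.e., X_k(σ) = 1 iff the projection of σ to S_k fixes k), and X_k(σ) = 0 otherwise, are independent, with P(X_k = 1) = 1/k. -/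
/-!
The map `σ ↦ (σ (m + 1), p_{m+1} σ)` is a bijection `S_{m+1} ≃ {1, …, m+1} × S_m`
(`Equiv.Perm.decomposeOption`). Under it `X_{m+1}` only sees the first coordinate (it is `1`
exactly when that coordinate is `m + 1`), while `X_k` for `k ≤ m` only sees the second, because
`X_k` on `S_{m+1}` is `X_k ∘ p_{m+1}`. So the uniform measure on `S_{m+1}` is the product of a
uniform letter, which makes `X_{m+1}` Bernoulli(`1/(m+1)`), and the uniform measure on `S_m`,
and induction on `n` shows that the joint law of `X_1, …, X_n` is the product of Bernoulli(`1/k`).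
-/

open Finset
open scoped Classical

/-- One projection step `S_{m+1} → S_m`: delete the top letter (the letter `m+1`,
i.e. the element `Fin.last m`) from its cycle.  Concretely, transport `σ` to a
permutation of `Option (Fin m)` via `finSuccEquivLast` (which sends the last element
to `none`) and remove `none` from its cycle via `Equiv.removeNone`. -/
def projStep {m : ℕ} (σ : Equiv.Perm (Fin (m + 1))) : Equiv.Perm (Fin m) :=
  Equiv.removeNone (finSuccEquivLast.permCongr σ)

/-- The composed projection `S_{k+j} → S_k`, deleting the letters `k+j, ..., k+1`
one at a time. -/
def projTo (k : ℕ) : (j : ℕ) → Equiv.Perm (Fin (k + j)) → Equiv.Perm (Fin k)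
  | 0, σ => σ
  | j + 1, σ => projTo k j (projStep σ)

/-- For `σ ∈ S_n` (acting on `Fin n`, thought of as the letters `1, ..., n`),
`Xfun n k σ = 1` if the projection of `σ` to `S_k` fixes the letter `k`
(the top element of `Fin k`), and `0` otherwise (`0` also if `k ∉ {1,...,n}`). -/
def Xfun (n k : ℕ) (σ : Equiv.Perm (Fin n)) : ℕ :=
  if h : 1 ≤ k ∧ k ≤ n then
    if projTo k (n - k) ((finCongr (by omega : n = k + (n - k))).permCongr σ)
        ⟨k - 1, by omega⟩ = (⟨k - 1, by omega⟩ : Fin k) then 1 else 0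
  else 0

open Equiv
open scoped Nat

def bernoulliProb (p : ℚ) (v : ℕ) : ℚ :=
  if v = 1 then p else if v = 0 then 1 - p else 0

lemma card_filter_equiv_prod {α β γ : Type*} [Fintype α] [Fintype β] [Fintype γ]
    (e : α ≃ β × γ) (p : β → Prop) (q : γ → Prop) [DecidablePred p] [DecidablePred q] :
    #{a | p (e a).1 ∧ q (e a).2} = #{b | p b} * #{c | q c} := by
  rw [← card_product, ← filter_product]
  exact card_equiv e fun a => by simp

lemma projTo_finCongr {k j j' : ℕ} (h : k + j = k + j') (σ : Perm (Fin (k + j))) :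
    projTo k j' ((finCongr h).permCongr σ) = projTo k j σ := by
  obtain rfl : j = j' := by omega
  rfl

lemma Xfun_add {k : ℕ} (j : ℕ) (hk : 1 ≤ k) (σ : Perm (Fin (k + j))) :
    Xfun (k + j) k σ =
      if projTo k j σ ⟨k - 1, by omega⟩ = ⟨k - 1, by omega⟩ then 1 else 0 := by
  rw [Xfun, dif_pos ⟨hk, by omega⟩, projTo_finCongr]

lemma Xfun_succ {m k : ℕ} (hk : 1 ≤ k) (hkm : k ≤ m) (σ : Perm (Fin (m + 1))) :
    Xfun (m + 1) k σ = Xfun m k (projStep σ) := by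
  obtain ⟨j, rfl⟩ := Nat.exists_eq_add_of_le hkm
  exact (Xfun_add (j + 1) hk σ).trans (Xfun_add j hk _).symm

lemma Xfun_succ_self {m : ℕ} (σ : Perm (Fin (m + 1))) :
    Xfun (m + 1) (m + 1) σ = if σ (Fin.last m) = Fin.last m then 1 else 0 :=
  Xfun_add 0 m.succ_pos σ

/-- `σ ↦ (σ (m + 1), projStep σ)`, with the letter `m + 1` read as `none`. -/
def permSuccEquiv (m : ℕ) : Perm (Fin (m + 1)) ≃ Option (Fin m) × Perm (Fin m) :=
  (permCongr finSuccEquivLast).trans Perm.decomposeOption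

lemma permSuccEquiv_snd {m : ℕ} (σ : Perm (Fin (m + 1))) :
    (permSuccEquiv m σ).2 = projStep σ := rfl

lemma permSuccEquiv_fst_eq_none_iff {m : ℕ} (σ : Perm (Fin (m + 1))) :
    (permSuccEquiv m σ).1 = none ↔ σ (Fin.last m) = Fin.last m := by
  rw [← finSuccEquivLast_last, ← finSuccEquivLast.apply_eq_iff_eq]
  simp [permSuccEquiv, Perm.decomposeOption, permCongr_apply]

lemma card_filter_Xfun_succ {m : ℕ} (S : Finset ℕ) (hS : ∀ k ∈ S, 1 ≤ k ∧ k ≤ m + 1)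
    (v : ℕ → ℕ) :
    #{σ : Perm (Fin (m + 1)) | ∀ k ∈ S, Xfun (m + 1) k σ = v k}
      = #{a : Option (Fin m) | m + 1 ∈ S → (if a = none then 1 else 0) = v (m + 1)} *
        -- with a bare `m + 1` the filter would pick the classical decidability instance
        #{ρ : Perm (Fin m) | ∀ k ∈ S.erase (m + (1 : ℕ)), Xfun m k ρ = v k} := by
  rw [← card_filter_equiv_prod (permSuccEquiv m)]
  congr 1
  ext σ
  simp only [mem_filter, mem_univ, true_and, permSuccEquiv_snd,
    if_congr (permSuccEquiv_fst_eq_none_iff σ) rfl rfl, ← Xfun_succ_self, mem_erase]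
  constructor
  · intro h
    refine ⟨h _, fun k ⟨hkm, hk⟩ => ?_⟩
    rw [← Xfun_succ (hS k hk).1 (by have := (hS k hk).2; omega)]
    exact h k hk
  · rintro ⟨htop, hlow⟩ k hk
    obtain rfl | hkm := eq_or_ne k (m + 1)
    · exact htop hk
    · rw [Xfun_succ (hS k hk).1 (by have := (hS k hk).2; omega)]
      exact hlow k ⟨hkm, hk⟩

lemma card_filter_indicator_none_div (m w : ℕ) :
    (#{a : Option (Fin m) | (if a = none then 1 else 0) = w} : ℚ) / (m + 1)
      = bernoulliProb (1 / (m + 1)) w := by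
  unfold bernoulliProb
  split_ifs with h1 h0
  · subst h1
    have : #{a : Option (Fin m) | a = none} = 1 := card_eq_one.mpr ⟨none, by ext; simp⟩
    simp [this]
  · subst h0
    have : #{a : Option (Fin m) | a ≠ none} = m := by
      rw [filter_ne', card_erase_of_mem (mem_univ _), card_univ, Fintype.card_option,
        Fintype.card_fin, Nat.add_sub_cancel]
    simp only [ite_eq_right_iff, one_ne_zero, imp_false, this]
    field_simp
    ring
  · rw [filter_false_of_mem fun a _ => by split_ifs <;> omega]
    simp

theorem card_filter_Xfun_div_factorial (n : ℕ) (S : Finset ℕ) (hS : ∀ k ∈ S, 1 ≤ k ∧ k ≤ n)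
    (v : ℕ → ℕ) :
    (#{σ : Perm (Fin n) | ∀ k ∈ S, Xfun n k σ = v k} : ℚ) / n !
      = ∏ k ∈ S, bernoulliProb (1 / k) (v k) := by
  induction n generalizing S with
  | zero =>
    obtain rfl : S = ∅ := eq_empty_of_forall_notMem fun k hk => by have := hS k hk; omega
    simp
  | succ m ih =>
    have hS' : ∀ k ∈ S.erase (m + 1), 1 ≤ k ∧ k ≤ m := fun k hk => by
      have := hS k (mem_of_mem_erase hk); have := ne_of_mem_erase hk; omega
    rw [card_filter_Xfun_succ S hS v, Nat.factorial_succ, Nat.cast_mul, Nat.cast_mul,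
      mul_div_mul_comm, Nat.cast_succ, ih _ hS']
    by_cases htop : m + 1 ∈ S
    · simp only [htop, forall_const, card_filter_indicator_none_div]
      rw [← mul_prod_erase S _ htop]
      push_cast
      ring
    · have hm : (m + 1 : ℚ) ≠ 0 := by positivity
      simp [htop, hm]

theorem Xfun_independent_bernoulli_general (n : ℕ) :
    (∀ S : Finset ℕ, (∀ k ∈ S, 1 ≤ k ∧ k ≤ n) → ∀ v : ℕ → ℕ,
      ((Finset.univ.filter fun σ : Equiv.Perm (Fin n) => ∀ k ∈ S, Xfun n k σ = v k).card : ℚ) /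
          (Fintype.card (Equiv.Perm (Fin n)))
        = ∏ k ∈ S,
            ((Finset.univ.filter fun σ : Equiv.Perm (Fin n) => Xfun n k σ = v k).card : ℚ) /
              (Fintype.card (Equiv.Perm (Fin n)))) ∧
    (∀ k : ℕ, 1 ≤ k → k ≤ n →
      ((Finset.univ.filter fun σ : Equiv.Perm (Fin n) => Xfun n k σ = 1).card : ℚ) /
          (Fintype.card (Equiv.Perm (Fin n)))
        = 1 / k) := by
  simp only [Fintype.card_perm, Fintype.card_fin]
  have hmarginal : ∀ k, 1 ≤ k → k ≤ n → ∀ w : ℕ,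
      (#{σ : Perm (Fin n) | Xfun n k σ = w} : ℚ) / n ! = bernoulliProb (1 / k) w := by
    intro k hk1 hkn w
    simpa using card_filter_Xfun_div_factorial n {k} (by simp [hk1, hkn]) fun _ => w
  refine ⟨fun S hS v => ?_, fun k hk1 hkn => ?_⟩
  · rw [card_filter_Xfun_div_factorial n S hS v]
    exact prod_congr rfl fun k hk => (hmarginal k (hS k hk).1 (hS k hk).2 (v k)).symm
  · rw [hmarginal k hk1 hkn 1, bernoulliProb, if_pos rfl]

/-- On `S_n` with the uniform probability measure, the random variables
`X_1, ..., X_n` (indicators that the projection of `σ` to `S_k` fixes the letter `k`)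
are independent, with `P(X_k = 1) = 1/k`. -/
theorem Xfun_independent_bernoulli (n : ℕ) (hn : 1 ≤ n) :
    (∀ S : Finset ℕ, (∀ k ∈ S, 1 ≤ k ∧ k ≤ n) → ∀ v : ℕ → ℕ,
      ((Finset.univ.filter fun σ : Equiv.Perm (Fin n) => ∀ k ∈ S, Xfun n k σ = v k).card : ℚ) /
          (Fintype.card (Equiv.Perm (Fin n)))
        = ∏ k ∈ S,
            ((Finset.univ.filter fun σ : Equiv.Perm (Fin n) => Xfun n k σ = v k).card : ℚ) /
              (Fintype.card (Equiv.Perm (Fin n)))) ∧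
    (∀ k : ℕ, 1 ≤ k → k ≤ n →
      ((Finset.univ.filter fun σ : Equiv.Perm (Fin n) => Xfun n k σ = 1).card : ℚ) /
          (Fintype.card (Equiv.Perm (Fin n)))
        = 1 / k) :=
  Xfun_independent_bernoulli_general n
end

section
/- Fix N ≥ 1, and for j = 1, ..., N-1 set x_j = y_j + α_N·conj(y_{N-j}), x_N = α_N, where y_1, ..., y_{N-1} are complex functions of α_1, ..., α_{N-1} (independent of α_N), with convention y_0 = 1. Then as differential forms, dx_1 ∧ dx̄_1 ∧ ... ∧ dx_N ∧ dx̄_N = (1 - |α_N|²)^{N-1} · dy_1 ∧ dȳ_1 ∧ ... ∧ dy_{N-1} ∧ dȳ_{N-1} ∧ dα_N ∧ dᾱ_N. -/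
/-!
After regrouping `(x_1, …, x_N)` as `((x_1, …, x_M), x_N)`, the derivative of
`(y, α) ↦ (y + α J y, α)`, where `J y = conj (y ∘ rev)`, is block triangular with diagonal
blocks `id + α J` and `1`. The `ℂ`-linear, invertible map `P v = (1 + i) v + (1 - i) (v ∘ rev)`
satisfies `P (J v) = conj (P v)`, so it conjugates `id + α J` into the coordinatewise map
`z ↦ z + α z̄`, whose real determinant is `1 - |α|²` in each of the `M` coordinates.
-/

open Complex ComplexConjugate

noncomputable section

namespace LinearMap

theorem det_prod_coprod_comp_snd {R M₁ M₂ : Type*} [CommRing R] [AddCommGroup M₁]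
    [AddCommGroup M₂] [Module R M₁] [Module R M₂] [Module.Free R M₁] [Module.Free R M₂]
    [Module.Finite R M₁] [Module.Finite R M₂]
    (f : Module.End R M₁) (g : M₂ →ₗ[R] M₁) (h : Module.End R M₂) :
    ((f.coprod g).prod (h ∘ₗ snd R M₁ M₂)).det = f.det * h.det := by
  classical
  let b₁ := Module.Free.chooseBasis R M₁
  let b₂ := Module.Free.chooseBasis R M₂
  have hmat : toMatrix (b₁.prod b₂) (b₁.prod b₂) ((f.coprod g).prod (h ∘ₗ snd R M₁ M₂)) =
      Matrix.fromBlocks (toMatrix b₁ b₁ f) (toMatrix b₂ b₁ g) 0 (toMatrix b₂ b₂ h) := by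
    ext (i | i) (j | j) <;> simp [toMatrix]
  rw [← det_toMatrix (b₁.prod b₂), ← det_toMatrix b₁, ← det_toMatrix b₂, hmat,
    Matrix.det_fromBlocks_zero₂₁]

theorem comp_fderiv {𝕜 E F G : Type*} [NontriviallyNormedField 𝕜] [CompleteSpace 𝕜]
    [NormedAddCommGroup E] [NormedSpace 𝕜 E] [NormedAddCommGroup F] [NormedSpace 𝕜 F]
    [FiniteDimensional 𝕜 F] [NormedAddCommGroup G] [NormedSpace 𝕜 G] {f : E → F} {x : E}
    (L : F →ₗ[𝕜] G) (hf : DifferentiableAt 𝕜 f x) :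
    L ∘ₗ (fderiv 𝕜 f x : E →ₗ[𝕜] F) = (fderiv 𝕜 (L ∘ f) x : E →ₗ[𝕜] G) := by
  have h := L.toContinuousLinearMap.hasFDerivAt.comp x hf.hasFDerivAt
  rw [coe_toContinuousLinearMap'] at h
  rw [h.fderiv]
  rfl

end LinearMap

theorem det_id_add_smul_conjAe (c : ℂ) :
    LinearMap.det (LinearMap.id + c • conjAe.toLinearMap) = 1 - ‖c‖ ^ 2 := by
  rw [← LinearMap.det_toMatrix basisOneI, Matrix.det_fin_two, Complex.sq_norm, normSq_apply]
  simp [LinearMap.toMatrix_apply]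
  ring

section ConjComp

variable {ι : Type*} {σ : ι → ι}

@[simps]
def conjComp (σ : ι → ι) : (ι → ℂ) →ₗ[ℝ] (ι → ℂ) where
  toFun v k := conj (v (σ k))
  map_add' v w := by ext k; simp
  map_smul' r v := by ext k; simp

@[simps]
def conjCompIntertwiner (σ : ι → ι) : (ι → ℂ) →ₗ[ℝ] (ι → ℂ) where
  toFun v k := (1 + I) * v k + (1 - I) * v (σ k)
  map_add' v w := by ext k; simp; ring
  map_smul' r v := by ext k; simp; ring

theorem conjCompIntertwiner_conjCompIntertwiner (hσ : Function.Involutive σ) (v : ι → ℂ) :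
    conjCompIntertwiner σ (conjCompIntertwiner σ v) = fun k => 4 * v (σ k) := by
  ext k
  simp only [conjCompIntertwiner_apply, hσ k]
  ring_nf
  simp only [I_sq]
  ring

theorem conjCompIntertwiner_injective (hσ : Function.Involutive σ) :
    Function.Injective (conjCompIntertwiner σ) := by
  intro v w h
  have h4 := congrArg (conjCompIntertwiner σ) h
  simp only [conjCompIntertwiner_conjCompIntertwiner hσ] at h4
  ext k
  simpa [hσ k] using congrFun h4 (σ k)

theorem conjCompIntertwiner_comp (hσ : Function.Involutive σ) (c : ℂ) :
    conjCompIntertwiner σ ∘ₗ (LinearMap.id + c • conjComp σ) =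
      LinearMap.compLeft (LinearMap.id + c • conjAe.toLinearMap) ι ∘ₗ conjCompIntertwiner σ := by
  ext v k
  simp [hσ k]
  ring

theorem det_id_add_smul_conjComp [Fintype ι] (hσ : Function.Involutive σ) (c : ℂ) :
    LinearMap.det (LinearMap.id + c • conjComp σ) = (1 - ‖c‖ ^ 2) ^ Fintype.card ι := by
  have hP : LinearMap.det (conjCompIntertwiner σ) ≠ 0 :=
    (LinearMap.isUnit_det _ <| (LinearMap.isUnit_iff_ker_eq_bot _).2 <|
      LinearMap.ker_eq_bot.2 (conjCompIntertwiner_injective hσ)).ne_zero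
  have hpi : LinearMap.compLeft (LinearMap.id + c • conjAe.toLinearMap) ι =
      LinearMap.pi fun i => (LinearMap.id + c • conjAe.toLinearMap) ∘ₗ LinearMap.proj i := rfl
  refine mul_left_cancel₀ hP ?_
  rw [← LinearMap.det_comp, conjCompIntertwiner_comp hσ, LinearMap.det_comp, mul_comm, hpi,
    LinearMap.det_pi, det_id_add_smul_conjAe, Finset.prod_const, Finset.card_univ]

theorem det_fderiv_prod_add_smul_conjComp [Fintype ι] (hσ : Function.Involutive σ)
    (p : (ι → ℂ) × ℂ) :
    LinearMap.det (fderiv ℝ (fun w : (ι → ℂ) × ℂ => (w.1 + w.2 • conjComp σ w.1, w.2)) p :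
        (ι → ℂ) × ℂ →ₗ[ℝ] (ι → ℂ) × ℂ) = (1 - ‖p.2‖ ^ 2) ^ Fintype.card ι := by
  let J := LinearMap.toContinuousLinearMap (conjComp σ)
  have hJ : HasFDerivAt (fun w : (ι → ℂ) × ℂ => conjComp σ w.1) (J.comp (.fst ℝ _ _)) p :=
    J.hasFDerivAt.comp p hasFDerivAt_fst
  have hT : HasFDerivAt (fun w : (ι → ℂ) × ℂ => (w.1 + w.2 • conjComp σ w.1, w.2)) _ p :=
    (hasFDerivAt_fst.add (hasFDerivAt_snd.smul hJ)).prodMk hasFDerivAt_snd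
  calc _ = LinearMap.det (((LinearMap.id + p.2 • conjComp σ).coprod
        ((LinearMap.id : ℂ →ₗ[ℝ] ℂ).smulRight (conjComp σ p.1))).prod
          (LinearMap.id ∘ₗ LinearMap.snd ℝ _ _)) := by
        rw [hT.fderiv]
        congr 1
        ext <;> simp [J]
    _ = _ := by
      rw [LinearMap.det_prod_coprod_comp_snd, det_id_add_smul_conjComp hσ, LinearMap.det_id,
        mul_one]

end ConjComp

theorem det_castSucc_last_comp_fderiv {M : ℕ} (S : (Fin M → ℂ) × ℂ → Fin (M + 1) → ℂ)
    (hS : ∀ w j, S w (Fin.castSucc j) = w.1 j + w.2 * conj (w.1 j.rev))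
    (hS' : ∀ w, S w (Fin.last M) = w.2) (p : (Fin M → ℂ) × ℂ) :
    LinearMap.det ((LinearMap.funLeft ℝ ℂ Fin.castSucc).prod (LinearMap.proj (Fin.last M)) ∘ₗ
      (fderiv ℝ S p : (Fin M → ℂ) × ℂ →ₗ[ℝ] Fin (M + 1) → ℂ)) = (1 - ‖p.2‖ ^ 2) ^ M := by
  have hdiff : DifferentiableAt ℝ S p := by
    refine differentiableAt_pi.2 fun k => Fin.lastCases ?_ (fun j => ?_) k
    · simp_rw [hS']
      fun_prop
    · simp_rw [hS]
      fun_prop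
  have hT : (LinearMap.funLeft ℝ ℂ Fin.castSucc).prod (LinearMap.proj (Fin.last M)) ∘ S =
      fun w => (w.1 + w.2 • conjComp Fin.rev w.1, w.2) := by
    ext w j
    · simp [hS]
    · simp [hS']
  rw [LinearMap.comp_fderiv _ hdiff, hT, det_fderiv_prod_add_smul_conjComp Fin.rev_involutive,
    Fintype.card_fin]

end

/-- The identity of top-degree forms is encoded as the statement that the real Jacobian
determinant of `S : (y, α_N) ↦ (x_1, …, x_N)`, with `N = M + 1` and the coordinates of the target
regrouped as `((x_1, …, x_M), x_N)`, equals `(1 - |α_N|²) ^ M`. -/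
theorem verblunsky_jacobian_inductive_step (M : ℕ) (y : Fin M → ℂ) (a : ℂ) :
    LinearMap.det
        ((LinearMap.prod (LinearMap.funLeft ℝ ℂ (Fin.castSucc : Fin M → Fin (M + 1)))
            (LinearMap.proj (Fin.last M))) ∘ₗ
          (fderiv ℝ
            (fun w : (Fin M → ℂ) × ℂ => fun k : Fin (M + 1) =>
              if h : k.1 + 1 < M + 1 then
                w.1 ⟨k.1, by omega⟩ + w.2 * (starRingEnd ℂ) (w.1 ⟨M - k.1 - 1, by omega⟩)
              else w.2)
            (y, a)).toLinearMap)
      = (1 - ‖a‖ ^ 2) ^ M :=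
  det_castSucc_last_comp_fderiv _ (fun w j => by simp [Fin.rev, Nat.sub_sub]) (fun w => by simp)
    (y, a)
end

section
/- For every positive integer n and every β > 0: sum over all integer sequences i(1) > j(1) > i(2) > ... > i(L) > j(L) ≥ 0 (for some 1 ≤ L ≤ n) satisfying sum_{u=1}^L (i(u) - j(u)) = n, of prod_{u=1}^L 1/((i(u)β + 1)(j(u)β + 1)), equals prod_{k=1}^n ((1/k)β^{-1} + (k-1)/k). -/
open Finset

/-- The (countable) type of interlaced integer sequences
`i(1) > j(1) > i(2) > ⋯ > i(L) > j(L) ≥ 0` (for some `1 ≤ L ≤ n`) with total gap sum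
`∑_{u=1}^L (i(u) - j(u)) = n`, encoded as pairs of functions `Fin L → ℕ`. -/
def TupleIdx (n : ℕ) : Type :=
  Σ L : ℕ, { p : (Fin L → ℕ) × (Fin L → ℕ) //
    1 ≤ L ∧ L ≤ n ∧ (∀ u : Fin L, p.2 u < p.1 u) ∧
      (∀ u v : Fin L, u.1 + 1 = v.1 → p.1 v < p.2 u) ∧
      ∑ u, (p.1 u - p.2 u) = n }

/-!
Encode a sequence `i(1) > j(1) > ⋯ > j(L)` as the list of its pairs and write `w x = 1 / (x β + 1)`.
Let `T n b` be the sum restricted to sequences with `i(1) < b`. Splitting off the first pair gives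
`T n (b + 1) = T n b + w b * ∑_{b - n ≤ j < b} w j * T (n - (b - j)) j`. The closed form
`D n m = P n * ∏_{k < n} (1 - w (m - k))`, with `P n` the right-hand side, satisfies the same
recursion, so `T n b = D n (b - 1)`: with `T` replaced by `D`, the inner sum for gap sum `n + 1` and
`b = m + 1` equals `(n β + 1) * w (m - n) * D n m`, and all identities involved reduce to
`w x - w y = (y - x) β w x w y`. Finally `D n m → P n` as `m → ∞` since `w x → 0`, and the full sum
is the increasing limit of the `T n b`.
-/

open Filter Topology
open scoped ENNReal

noncomputable section

theorem ENNReal.tsum_list_eq_add_tsum_cons {α : Type*} (f : List α → ℝ≥0∞) :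
    ∑' l, f l = f [] + ∑' a, ∑' l, f (a :: l) := by
  have hinj : Function.Injective fun x : α × List α => x.1 :: x.2 :=
    fun x y h => Prod.ext (List.cons.inj h).1 (List.cons.inj h).2
  rw [ENNReal.tsum_eq_add_tsum_ite [], ← hinj.tsum_eq fun l hl => ?_, ENNReal.tsum_prod']
  · simp
  obtain ⟨a, l, rfl⟩ := List.exists_cons_of_ne_nil fun h => hl (if_pos h)
  exact ⟨(a, l), rfl⟩

theorem ENNReal.tsum_iSup_of_monotone {α ι : Type*} [Preorder ι] [IsDirectedOrder ι]
    {f : α → ι → ℝ≥0∞} (hf : ∀ a, Monotone (f a)) :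
    ∑' a, ⨆ i, f a i = ⨆ i, ∑' a, f a i := by
  simp_rw [ENNReal.tsum_eq_iSup_sum, ENNReal.finsetSum_iSup_of_monotone hf]
  exact iSup_comm

theorem tsum_tsum_ite_mem_and {α β M : Type*} [DecidableEq α] [DecidableEq β] [AddCommMonoid M]
    [TopologicalSpace M] (s : Finset α) (t : α → Finset β) (f : α → β → M) :
    ∑' a, ∑' b, (if a ∈ s ∧ b ∈ t a then f a b else 0) = ∑ a ∈ s, ∑ b ∈ t a, f a b := by
  rw [tsum_eq_sum (s := s) fun a ha => by simp [ha]]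
  refine sum_congr rfl fun a ha => ?_
  rw [tsum_eq_sum (s := t a) fun b hb => by simp [hb]]
  exact sum_congr rfl fun b hb => by simp [ha, hb]

def Equiv.sigmaSubtypeEquivSubtypeSigma {α : Type*} {β : α → Type*} (P : ∀ a, β a → Prop) :
    (Σ a, {b : β a // P a b}) ≃ {x : Σ a, β a // P x.1 x.2} where
  toFun x := ⟨⟨x.1, x.2⟩, x.2.2⟩
  invFun x := ⟨x.1.1, x.1.2, x.2⟩
  left_inv _ := rfl
  right_inv _ := rfl

namespace InterlacedSum

variable {β : ℝ}

def weight (β : ℝ) (x : ℕ) : ℝ := 1 / (x * β + 1)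

def bernoulliPGF (β : ℝ) (n : ℕ) : ℝ :=
  ∏ k ∈ range n, ((1 / (k + 1 : ℝ)) * β⁻¹ + (k : ℝ) / (k + 1))

/-- The closed form of the sum over interlaced sequences with all entries `≤ m`. -/
def truncatedPGF (β : ℝ) (n m : ℕ) : ℝ :=
  bernoulliPGF β n * ∏ k ∈ range n, (1 - weight β (m - k))

/-- The closed-form counterpart of the sum over the sequences whose first pair is `(b, j)`, divided
by `weight β b`. At `j = 0` the truncated `j - 1` is harmless: `truncatedPGF β k 0` is `1` for
`k = 0` and `0` otherwise, the value of the empty rest. -/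
def gapEndSum (β : ℝ) (n b : ℕ) : ℝ :=
  ∑ j ∈ Ico (b - n) b, weight β j * truncatedPGF β (n - (b - j)) (j - 1)

theorem weight_pos (hβ : 0 ≤ β) (x : ℕ) : 0 < weight β x := by
  unfold weight; positivity

theorem weight_le_one (hβ : 0 ≤ β) (x : ℕ) : weight β x ≤ 1 :=
  div_le_one_of_le₀ (le_add_of_nonneg_left (by positivity)) (by positivity)

@[simp] theorem weight_zero : weight β 0 = 1 := by simp [weight]

theorem weight_sub_weight (hβ : 0 ≤ β) (a b : ℕ) :
    weight β a - weight β b = ((b : ℝ) - a) * β * weight β a * weight β b := by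
  have ha : (a : ℝ) * β + 1 ≠ 0 := by positivity
  have hb : (b : ℝ) * β + 1 ≠ 0 := by positivity
  unfold weight
  field_simp
  ring

theorem tendsto_weight_atTop (hβ : 0 < β) : Tendsto (weight β) atTop (𝓝 0) :=
  tendsto_const_nhds.div_atTop <|
    tendsto_atTop_add_const_right _ 1 (tendsto_natCast_atTop_atTop.atTop_mul_const hβ)

theorem bernoulliPGF_nonneg (hβ : 0 ≤ β) (n : ℕ) : 0 ≤ bernoulliPGF β n :=
  prod_nonneg fun _ _ => by positivity

theorem bernoulliPGF_succ_mul (hβ : β ≠ 0) (n : ℕ) :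
    bernoulliPGF β (n + 1) * ((n + 1) * β) = bernoulliPGF β n * (n * β + 1) := by
  rw [bernoulliPGF, prod_range_succ, mul_assoc]
  congr 1
  field_simp
  ring

theorem prod_one_sub_weight_eq_zero {n m : ℕ} (h : m < n) :
    ∏ k ∈ range n, (1 - weight β (m - k)) = 0 :=
  prod_eq_zero (mem_range.2 h) (by simp)

@[simp] theorem truncatedPGF_zero_left (m : ℕ) : truncatedPGF β 0 m = 1 := by
  simp [truncatedPGF, bernoulliPGF]

theorem truncatedPGF_of_lt {n m : ℕ} (h : m < n) : truncatedPGF β n m = 0 := by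
  rw [truncatedPGF, prod_one_sub_weight_eq_zero h, mul_zero]

theorem truncatedPGF_nonneg (hβ : 0 ≤ β) (n m : ℕ) : 0 ≤ truncatedPGF β n m :=
  mul_nonneg (bernoulliPGF_nonneg hβ n) <|
    prod_nonneg fun _ _ => sub_nonneg.2 (weight_le_one hβ _)

theorem gapEndSum_nonneg (hβ : 0 ≤ β) (n b : ℕ) : 0 ≤ gapEndSum β n b :=
  sum_nonneg fun j _ => mul_nonneg (weight_pos hβ j).le (truncatedPGF_nonneg hβ _ _)

theorem truncatedPGF_succ_succ (n m : ℕ) :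
    truncatedPGF β (n + 1) (m + 1) = bernoulliPGF β (n + 1) * (1 - weight β (m + 1)) *
      ∏ k ∈ range n, (1 - weight β (m - k)) := by
  simp [truncatedPGF, prod_range_succ', mul_assoc, mul_comm]

theorem truncatedPGF_succ_left (n m : ℕ) :
    truncatedPGF β (n + 1) m = bernoulliPGF β (n + 1) *
      (∏ k ∈ range n, (1 - weight β (m - k))) * (1 - weight β (m - n)) := by
  rw [truncatedPGF, prod_range_succ, mul_assoc]

theorem weight_sub_weight_of_le (hβ : 0 ≤ β) {n m : ℕ} (h : n ≤ m) :
    weight β (m - n) - weight β (m + 1) = (n + 1) * β * weight β (m - n) * weight β (m + 1) := by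
  rw [weight_sub_weight hβ]
  push_cast [h]
  ring

theorem truncatedPGF_succ_succ_eq_add (hβ : 0 < β) (n m : ℕ) :
    truncatedPGF β (n + 1) (m + 1) = truncatedPGF β (n + 1) m +
      (n * β + 1) * weight β (m + 1) * weight β (m - n) * truncatedPGF β n m := by
  rw [truncatedPGF_succ_succ, truncatedPGF_succ_left, truncatedPGF]
  rcases le_or_gt n m with h | h
  · linear_combination (bernoulliPGF β (n + 1) * ∏ k ∈ range n, (1 - weight β (m - k))) *
        weight_sub_weight_of_le hβ.le h + (∏ k ∈ range n, (1 - weight β (m - k))) *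
        weight β (m - n) * weight β (m + 1) * bernoulliPGF_succ_mul hβ.ne' n
  · simp [prod_one_sub_weight_eq_zero h]

theorem truncatedPGF_succ_succ_mul (hβ : 0 < β) (n m : ℕ) :
    ((n + 1) * β + 1) * weight β (m - n) * truncatedPGF β (n + 1) (m + 1) =
      (n * β + 1) * weight β (m - n) * truncatedPGF β n m +
        weight β (m + 1) * truncatedPGF β (n + 1) m := by
  rw [truncatedPGF_succ_succ, truncatedPGF_succ_left, truncatedPGF]
  rcases le_or_gt n m with h | h
  · linear_combination (bernoulliPGF β (n + 1) * ∏ k ∈ range n, (1 - weight β (m - k))) *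
        weight_sub_weight_of_le hβ.le h + (∏ k ∈ range n, (1 - weight β (m - k))) *
        weight β (m - n) * bernoulliPGF_succ_mul hβ.ne' n
  · simp [prod_one_sub_weight_eq_zero h]

theorem gapEndSum_succ_succ (n m : ℕ) :
    gapEndSum β (n + 2) (m + 2) =
      weight β (m + 1) * truncatedPGF β (n + 1) m + gapEndSum β (n + 1) (m + 1) := by
  rw [gapEndSum, gapEndSum, Nat.add_sub_add_right, Nat.add_sub_add_right,
    sum_Ico_succ_top (by omega), add_comm]
  congr 1
  · simp
  · refine sum_congr rfl fun j hj => ?_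
    rw [mem_Ico] at hj
    congr 2
    omega

theorem gapEndSum_succ_succ_eq (hβ : 0 < β) (n m : ℕ) :
    gapEndSum β (n + 1) (m + 1) = (n * β + 1) * weight β (m - n) * truncatedPGF β n m := by
  induction n generalizing m with
  | zero => simp [gapEndSum]
  | succ n ih =>
    cases m with
    | zero => simp [gapEndSum, truncatedPGF_of_lt]
    | succ m =>
      rw [gapEndSum_succ_succ, ih, Nat.add_sub_add_right, add_comm,
        ← truncatedPGF_succ_succ_mul hβ]
      push_cast
      ring

theorem truncatedPGF_eq_add_gapEndSum (hβ : 0 < β) (n b : ℕ) :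
    truncatedPGF β n b = truncatedPGF β n (b - 1) + weight β b * gapEndSum β n b := by
  rcases n with _ | n
  · simp [gapEndSum]
  rcases b with _ | m
  · simp [gapEndSum]
  rw [gapEndSum_succ_succ_eq hβ, truncatedPGF_succ_succ_eq_add hβ, Nat.add_sub_cancel]
  ring

theorem tendsto_truncatedPGF (hβ : 0 < β) (n : ℕ) :
    Tendsto (truncatedPGF β n) atTop (𝓝 (bernoulliPGF β n)) := by
  have h : ∀ k, Tendsto (fun m => 1 - weight β (m - k)) atTop (𝓝 1) := fun k => by
    simpa using ((tendsto_weight_atTop hβ).comp (tendsto_sub_atTop_nat k)).const_sub 1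
  have := (tendsto_finsetProd (range n) fun k _ => h k).const_mul (bernoulliPGF β n)
  rwa [prod_const_one, mul_one] at this

def IsInterlaced (l : List (ℕ × ℕ)) : Prop :=
  (∀ p ∈ l, p.2 < p.1) ∧ l.IsChain fun p q => q.1 < p.2

def IsInterlacedBelow : ℕ → List (ℕ × ℕ) → Prop
  | _, [] => True
  | b, p :: l => p.2 < p.1 ∧ p.1 < b ∧ IsInterlacedBelow p.2 l

def totalGap (l : List (ℕ × ℕ)) : ℕ := (l.map fun p => p.1 - p.2).sum

def listWeight (β : ℝ) (l : List (ℕ × ℕ)) : ℝ := (l.map fun p => weight β p.1 * weight β p.2).prod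

theorem isInterlacedBelow_iff {b : ℕ} {l : List (ℕ × ℕ)} :
    IsInterlacedBelow b l ↔ IsInterlaced l ∧ ∀ p ∈ l.head?, p.1 < b := by
  induction l generalizing b with
  | nil => simp [IsInterlacedBelow, IsInterlaced]
  | cons p l ih =>
    simp only [IsInterlacedBelow, ih, IsInterlaced, List.isChain_cons, List.mem_cons,
      forall_eq_or_imp, List.head?_cons, Option.mem_def, Option.some.injEq, forall_eq']
    tauto

theorem IsInterlacedBelow.mono {b b' : ℕ} (hb : b ≤ b') :
    ∀ {l : List (ℕ × ℕ)}, IsInterlacedBelow b l → IsInterlacedBelow b' l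
  | [], _ => trivial
  | _ :: _, ⟨h₁, h₂, h₃⟩ => ⟨h₁, h₂.trans_le hb, h₃⟩

theorem isInterlaced_iff_exists_isInterlacedBelow {l : List (ℕ × ℕ)} :
    IsInterlaced l ↔ ∃ b, IsInterlacedBelow b l := by
  refine ⟨fun h => ?_, fun ⟨b, hb⟩ => (isInterlacedBelow_iff.1 hb).1⟩
  rcases l with _ | ⟨p, l⟩
  · exact ⟨0, trivial⟩
  · exact ⟨p.1 + 1, isInterlacedBelow_iff.2 ⟨h, by simp⟩⟩

theorem listWeight_nonneg (hβ : 0 ≤ β) (l : List (ℕ × ℕ)) : 0 ≤ listWeight β l :=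
  List.prod_nonneg fun _ hx => by
    obtain ⟨p, -, rfl⟩ := List.mem_map.1 hx
    exact mul_nonneg (weight_pos hβ _).le (weight_pos hβ _).le

open Classical in
def boundedSum (β : ℝ) (n b : ℕ) : ℝ≥0∞ :=
  ∑' l, if IsInterlacedBelow b l ∧ totalGap l = n then ENNReal.ofReal (listWeight β l) else 0

theorem isInterlacedBelow_cons_and_totalGap_iff {n b i j : ℕ} {l : List (ℕ × ℕ)} :
    IsInterlacedBelow b ((i, j) :: l) ∧ totalGap ((i, j) :: l) = n ↔
      (i ∈ range b ∧ j ∈ Ico (i - n) i) ∧ IsInterlacedBelow j l ∧ totalGap l = n - (i - j) := by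
  simp only [IsInterlacedBelow, totalGap, List.map_cons, List.sum_cons, mem_range, mem_Ico]
  constructor
  · rintro ⟨⟨hji, hib, hl⟩, hn⟩
    exact ⟨⟨hib, by omega, hji⟩, hl, by omega⟩
  · rintro ⟨⟨hib, hij, hji⟩, hl, hn⟩
    exact ⟨⟨hji, hib, hl⟩, by omega⟩

theorem boundedSum_eq (hβ : 0 ≤ β) (n b : ℕ) :
    boundedSum β n b = (if n = 0 then 1 else 0) + ∑ i ∈ range b, ∑ j ∈ Ico (i - n) i,
      ENNReal.ofReal (weight β i * weight β j) * boundedSum β (n - (i - j)) j := by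
  classical
  rw [boundedSum, ENNReal.tsum_list_eq_add_tsum_cons, ENNReal.tsum_prod', ← tsum_tsum_ite_mem_and]
  congr 1
  · simp [IsInterlacedBelow, totalGap, listWeight, eq_comm]
  refine tsum_congr fun i => tsum_congr fun j => ?_
  simp only [isInterlacedBelow_cons_and_totalGap_iff]
  split_ifs with h
  · rw [boundedSum, ← ENNReal.tsum_mul_left]
    refine tsum_congr fun l => ?_
    rw [listWeight, List.map_cons, List.prod_cons, ENNReal.ofReal_mul
      (mul_nonneg (weight_pos hβ _).le (weight_pos hβ _).le)]
    simp [h, listWeight]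
  · simp only [h, false_and, if_false, tsum_zero]

theorem boundedSum_succ (hβ : 0 ≤ β) (n b : ℕ) :
    boundedSum β n (b + 1) = boundedSum β n b + ∑ j ∈ Ico (b - n) b,
      ENNReal.ofReal (weight β b * weight β j) * boundedSum β (n - (b - j)) j := by
  rw [boundedSum_eq hβ, boundedSum_eq hβ n b, sum_range_succ, add_assoc]

theorem boundedSum_eq_ofReal (hβ : 0 < β) (n b : ℕ) :
    boundedSum β n b = ENNReal.ofReal (truncatedPGF β n (b - 1)) := by
  induction b using Nat.strong_induction_on generalizing n with
  | _ b ih =>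
  rcases b with _ | b
  · rw [boundedSum_eq hβ.le]
    rcases n with _ | n <;> simp [truncatedPGF_of_lt]
  have hw := fun x => (weight_pos hβ.le x).le
  have hterm : ∀ j, 0 ≤ weight β j * truncatedPGF β (n - (b - j)) (j - 1) :=
    fun j => mul_nonneg (hw j) (truncatedPGF_nonneg hβ.le _ _)
  rw [boundedSum_succ hβ.le, ih b (by omega), Nat.add_sub_cancel,
    truncatedPGF_eq_add_gapEndSum hβ n b, ENNReal.ofReal_add (truncatedPGF_nonneg hβ.le _ _)
      (mul_nonneg (hw b) (gapEndSum_nonneg hβ.le n b)),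
    ENNReal.ofReal_mul (hw b), gapEndSum, ENNReal.ofReal_sum_of_nonneg fun j _ => hterm j, mul_sum]
  refine congrArg _ (sum_congr rfl fun j hj => ?_)
  rw [ih j (by simp at hj; omega), ENNReal.ofReal_mul (hw j), ENNReal.ofReal_mul (hw b), mul_assoc]

open Classical in
theorem monotone_ite_isInterlacedBelow (n : ℕ) (l : List (ℕ × ℕ)) (x : ℝ≥0∞) :
    Monotone fun b => if IsInterlacedBelow b l ∧ totalGap l = n then x else 0 := by
  intro b b' hb
  dsimp only
  split_ifs with h h'
  · exact le_rfl
  · exact absurd ⟨h.1.mono hb, h.2⟩ h'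
  · exact zero_le
  · exact le_rfl

theorem monotone_boundedSum (n : ℕ) : Monotone (boundedSum β n) := fun _ _ hb =>
  ENNReal.tsum_le_tsum fun l => monotone_ite_isInterlacedBelow n l _ hb

def interlacedSum (β : ℝ) (n : ℕ) : ℝ≥0∞ :=
  ∑' l : {l : List (ℕ × ℕ) // IsInterlaced l ∧ totalGap l = n}, ENNReal.ofReal (listWeight β l)

theorem interlacedSum_eq_iSup (n : ℕ) : interlacedSum β n = ⨆ b, boundedSum β n b := by
  classical
  refine (tsum_subtype {l | IsInterlaced l ∧ totalGap l = n}
    fun l => ENNReal.ofReal (listWeight β l)).trans ?_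
  unfold boundedSum
  rw [← ENNReal.tsum_iSup_of_monotone fun l => monotone_ite_isInterlacedBelow n l _]
  refine tsum_congr fun l => ?_
  rw [Set.indicator_apply]
  split_ifs with h
  · obtain ⟨b, hb⟩ := isInterlaced_iff_exists_isInterlacedBelow.1 h.1
    refine le_antisymm (le_iSup_of_le b (by rw [if_pos ⟨hb, h.2⟩])) (iSup_le fun b => ?_)
    split_ifs <;> simp
  · refine (ENNReal.iSup_eq_zero.2 fun b => if_neg fun h' => h ?_).symm
    exact ⟨isInterlaced_iff_exists_isInterlacedBelow.2 ⟨b, h'.1⟩, h'.2⟩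

theorem interlacedSum_eq_ofReal (hβ : 0 < β) (n : ℕ) :
    interlacedSum β n = ENNReal.ofReal (bernoulliPGF β n) := by
  rw [interlacedSum_eq_iSup]
  refine tendsto_nhds_unique (tendsto_atTop_iSup (monotone_boundedSum n)) ?_
  exact (ENNReal.tendsto_ofReal ((tendsto_truncatedPGF hβ n).comp (tendsto_sub_atTop_nat 1))).congr
    fun b => (boundedSum_eq_ofReal hβ n b).symm

theorem isInterlaced_ofFn {L : ℕ} (v : Fin L → ℕ × ℕ) :
    IsInterlaced (List.ofFn v) ↔
      (∀ u, (v u).2 < (v u).1) ∧ ∀ u w : Fin L, u.1 + 1 = w.1 → (v w).1 < (v u).2 := by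
  rw [IsInterlaced, List.forall_mem_ofFn_iff, List.isChain_ofFn]
  refine and_congr_right' ⟨fun h ⟨u, hu⟩ ⟨w, hw⟩ huw => ?_, fun h i hi => h _ _ rfl⟩
  simp only at huw
  subst huw
  exact h u hw

theorem totalGap_ofFn {L : ℕ} (v : Fin L → ℕ × ℕ) :
    totalGap (List.ofFn v) = ∑ u, ((v u).1 - (v u).2) := by
  rw [totalGap, List.map_ofFn, List.sum_ofFn]
  rfl

theorem listWeight_ofFn {L : ℕ} (v : Fin L → ℕ × ℕ) :
    listWeight β (List.ofFn v) = ∏ u, weight β (v u).1 * weight β (v u).2 := by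
  rw [listWeight, List.map_ofFn, List.prod_ofFn]
  rfl

theorem length_le_totalGap : ∀ {l : List (ℕ × ℕ)}, IsInterlaced l → l.length ≤ totalGap l
  | [], _ => le_rfl
  | p :: l, h => by
    have hp := h.1 p List.mem_cons_self
    have hl := length_le_totalGap ⟨fun q hq => h.1 q (List.mem_cons_of_mem p hq), h.2.tail⟩
    simp only [List.length_cons, totalGap, List.map_cons, List.sum_cons] at hl ⊢
    omega

theorem tupleIdx_condition_iff {n L : ℕ} (hn : 1 ≤ n) (v : Fin L → ℕ × ℕ) :
    (1 ≤ L ∧ L ≤ n ∧ (∀ u, (v u).2 < (v u).1) ∧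
        (∀ u w : Fin L, u.1 + 1 = w.1 → (v w).1 < (v u).2) ∧ ∑ u, ((v u).1 - (v u).2) = n) ↔
      IsInterlaced (List.ofFn v) ∧ totalGap (List.ofFn v) = n := by
  rw [isInterlaced_ofFn, totalGap_ofFn]
  refine ⟨fun ⟨_, _, h⟩ => ⟨⟨h.1, h.2.1⟩, h.2.2⟩, fun ⟨h, hgap⟩ => ⟨?_, ?_, h.1, h.2, hgap⟩⟩
  · rcases L with _ | L
    · simp at hgap; omega
    · omega
  · have := length_le_totalGap ((isInterlaced_ofFn v).2 h)
    rwa [List.length_ofFn, totalGap_ofFn, hgap] at this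

def tupleIdxEquiv {n : ℕ} (hn : 1 ≤ n) :
    TupleIdx n ≃ {l : List (ℕ × ℕ) // IsInterlaced l ∧ totalGap l = n} :=
  (Equiv.sigmaCongrRight fun L => Equiv.subtypeEquivOfSubtype'
      (Equiv.arrowProdEquivProdArrow (Fin L) (fun _ => ℕ) (fun _ => ℕ)).symm).trans <|
    (Equiv.sigmaSubtypeEquivSubtypeSigma _).trans <|
      Equiv.subtypeEquiv List.equivSigmaTuple.symm fun x => tupleIdx_condition_iff hn x.2

theorem tupleIdxEquiv_apply {n : ℕ} (hn : 1 ≤ n) (t : TupleIdx n) :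
    (tupleIdxEquiv hn t : List (ℕ × ℕ)) = List.ofFn fun u => (t.2.1.1 u, t.2.1.2 u) :=
  rfl

end InterlacedSum

end

open InterlacedSum in
/-- For every `n ≥ 1` and `β > 0`:
`∑ ∏_{u=1}^L 1/((i(u)β + 1)(j(u)β + 1)) = ∏_{k=1}^n ((1/k) β⁻¹ + (k-1)/k)`,
summed over all interlaced sequences `i(1) > j(1) > ⋯ > i(L) > j(L) ≥ 0` with total gap
sum `n` (a factor with index `0` contributes `1/(0·β+1) = 1`). -/
theorem interlaced_sum_eq_bernoulli_product (n : ℕ) (hn : 1 ≤ n) (β : ℝ) (hβ : 0 < β) :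
    ∑' t : TupleIdx n, ∏ u : Fin t.1,
        (1 : ℝ) / (((t.2.1.1 u : ℝ) * β + 1) * ((t.2.1.2 u : ℝ) * β + 1))
      = ∏ k ∈ Finset.range n, ((1 / (k + 1 : ℝ)) * β⁻¹ + (k : ℝ) / (k + 1)) := by
  have hterm : ∀ t : TupleIdx n, ∏ u : Fin t.1,
      (1 : ℝ) / (((t.2.1.1 u : ℝ) * β + 1) * ((t.2.1.2 u : ℝ) * β + 1)) =
        (ENNReal.ofReal (listWeight β (tupleIdxEquiv hn t))).toReal := fun t => by
    rw [ENNReal.toReal_ofReal (listWeight_nonneg hβ.le _), tupleIdxEquiv_apply, listWeight_ofFn]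
    simp only [weight, one_div_mul_one_div]
  calc _ = (∑' t, ENNReal.ofReal (listWeight β (tupleIdxEquiv hn t))).toReal := by
        rw [ENNReal.tsum_toReal_eq fun _ => ENNReal.ofReal_ne_top]
        exact tsum_congr hterm
    _ = bernoulliPGF β n := by
        rw [Equiv.tsum_eq (tupleIdxEquiv hn) fun l => ENNReal.ofReal (listWeight β l),
          ← interlacedSum, interlacedSum_eq_ofReal hβ,
          ENNReal.toReal_ofReal (bernoulliPGF_nonneg hβ.le n)]
end

section
/- Let p and q be finitely supported multi-indices with deg(p) ≠ deg(q), and let f_n be independent complex random variables whose distributions are invariant under rotation f_n ↦ e^{-inθ}f_n for all θ (e.g., the Gaussians with density (nβ/π)e^{-nβ|f_n|²}). With x = exp(-f_+) = 1 + sum x_n z^n, one has E( prod_n x_n^{p(n)} · conj(prod_m x_m^{q(m)}) ) = 0. -/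
open Finset MeasureTheory

/-- The `n`-th coefficient of `x = exp(-f_+)`, `f_+ = ∑_{i≥1} a_i z^i`. -/
noncomputable def xGauss (n : ℕ) (a : ℕ → ℂ) : ℂ :=
  ∑ J ∈ MIdeg n, ((-1 : ℂ) ^ (∑ u, J u) / (∏ u, Nat.factorial (J u) : ℕ)) *
    ∏ u : Fin n, (a (u.1 + 1)) ^ (J u)

theorem integral_eq_zero_of_map_eq_of_comp_eq_smul {α 𝕜 E : Type*} [MeasurableSpace α]
    [NormedField 𝕜] [NormedAddCommGroup E] [NormedSpace ℝ E] [Module 𝕜 E] [NormSMulClass 𝕜 E]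
    [SMulCommClass ℝ 𝕜 E] {μ : Measure α} {T : α → α} (hT : Measurable T) (hμ : μ.map T = μ)
    {F : α → E} (hF : AEStronglyMeasurable F μ) {c : 𝕜} (hc : c ≠ 1)
    (hFT : ∀ a, F (T a) = c • F a) :
    ∫ a, F a ∂μ = 0 := by
  have hfix : ∫ a, F a ∂μ = c • ∫ a, F a ∂μ := by
    calc ∫ a, F a ∂μ = ∫ a, F a ∂μ.map T := by rw [hμ]
      _ = ∫ a, F (T a) ∂μ := integral_map hT.aemeasurable (by rwa [hμ])
      _ = c • ∫ a, F a ∂μ := by simp only [hFT, integral_smul]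
  have : (c - 1) • ∫ a, F a ∂μ = 0 := by rw [sub_smul, one_smul, ← hfix, sub_self]
  exact (smul_eq_zero.mp this).resolve_left (sub_ne_zero.mpr hc)

theorem Finsupp.prod_support_pow_mul_pow {M : Type*} [CommMonoid M] (p : ℕ →₀ ℕ) (t : M) (y : ℕ → M) :
    ∏ n ∈ p.support, (t ^ n * y n) ^ p n
      = t ^ (p.sum fun n k => n * k) * ∏ n ∈ p.support, y n ^ p n := by
  simp only [mul_pow, prod_mul_distrib, ← pow_mul, prod_pow_eq_pow_sum, Finsupp.sum]

theorem xGauss_pow_mul (n : ℕ) (t : ℂ) (a : ℕ → ℂ) :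
    xGauss n (fun m => t ^ m * a m) = t ^ n * xGauss n a := by
  rw [xGauss, xGauss, mul_sum]
  refine sum_congr rfl fun J hJ => ?_
  have hdeg : ∑ u, (u.1 + 1) * J u = n := (mem_filter.mp hJ).2
  simp only [mul_pow, prod_mul_distrib, ← pow_mul, prod_pow_eq_pow_sum, hdeg]
  ring

@[fun_prop]
theorem measurable_xGauss (n : ℕ) : Measurable fun a => xGauss n a := by
  unfold xGauss
  fun_prop

theorem Complex.exp_pow_mul_conj_exp_pow (θ : ℝ) (m k : ℕ) :
    Complex.exp (-θ * Complex.I) ^ m * (starRingEnd ℂ) (Complex.exp (-θ * Complex.I) ^ k)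
      = Complex.exp ((((k : ℝ) - m) * θ : ℝ) * Complex.I) := by
  rw [map_pow, ← Complex.exp_conj, ← Complex.exp_nat_mul, ← Complex.exp_nat_mul, ← Complex.exp_add]
  congr 1
  simp only [map_mul, map_neg, Complex.conj_ofReal, Complex.conj_I]
  push_cast
  ring

theorem rotation_invariance_vanishing_general (μ : Measure (ℕ → ℂ))
    (hrot : ∀ θ : ℝ,
      μ.map (fun a : ℕ → ℂ => fun n : ℕ => Complex.exp (-((n : ℝ) * θ) * Complex.I) * a n) = μ)
    (p q : ℕ →₀ ℕ)
    (hdeg : (p.sum fun n k => n * k) ≠ (q.sum fun n k => n * k)) :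
    ∫ a, (∏ n ∈ p.support, (xGauss n a) ^ (p n)) *
        (starRingEnd ℂ) (∏ m ∈ q.support, (xGauss m a) ^ (q m)) ∂μ = 0 := by
  set Sp := p.sum fun n k => n * k
  set Sq := q.sum fun n k => n * k
  have hd : (Sq : ℝ) - Sp ≠ 0 := sub_ne_zero.mpr (by exact_mod_cast hdeg.symm)
  set θ := Real.pi / ((Sq : ℝ) - Sp)
  set t := Complex.exp (-θ * Complex.I)
  have hrotθ : μ.map (fun a m => t ^ m * a m) = μ := by
    simpa only [t, ← Complex.exp_nat_mul, neg_mul, mul_neg, Complex.ofReal_mul,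
      Complex.ofReal_natCast, mul_assoc] using hrot θ
  refine integral_eq_zero_of_map_eq_of_comp_eq_smul (c := (-1 : ℂ))
    (measurable_pi_lambda _ fun m => (measurable_pi_apply m).const_mul _) hrotθ
    (by fun_prop) (by norm_num) fun a => ?_
  simp only [xGauss_pow_mul, Finsupp.prod_support_pow_mul_pow, map_mul, smul_eq_mul]
  have ht : t ^ Sp * (starRingEnd ℂ) (t ^ Sq) = -1 := by
    rw [Complex.exp_pow_mul_conj_exp_pow, mul_div_cancel₀ _ hd, Complex.exp_pi_mul_I]
  linear_combination (∏ n ∈ p.support, xGauss n a ^ p n) *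
    (starRingEnd ℂ) (∏ m ∈ q.support, xGauss m a ^ q m) * ht

/-- If the joint law of the coefficients `(f_n)` is invariant under the rotations
`f_n ↦ e^{-inθ} f_n`, the monomial `x^p conj(x^q)` is integrable, and
`deg p ≠ deg q`, then `E(∏ x_n^{p(n)} ⋅ conj(∏ x_m^{q(m)})) = 0`. -/
theorem rotation_invariance_vanishing (μ : Measure (ℕ → ℂ)) [IsProbabilityMeasure μ]
    (hrot : ∀ θ : ℝ,
      μ.map (fun a : ℕ → ℂ => fun n : ℕ => Complex.exp (-((n : ℝ) * θ) * Complex.I) * a n) = μ)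
    (p q : ℕ →₀ ℕ)
    (hdeg : (p.sum fun n k => n * k) ≠ (q.sum fun n k => n * k))
    (hint : Integrable
      (fun a : ℕ → ℂ => (∏ n ∈ p.support, (xGauss n a) ^ (p n)) *
        (starRingEnd ℂ) (∏ m ∈ q.support, (xGauss m a) ^ (q m))) μ) :
    ∫ a, (∏ n ∈ p.support, (xGauss n a) ^ (p n)) *
        (starRingEnd ℂ) (∏ m ∈ q.support, (xGauss m a) ^ (q m)) ∂μ = 0 :=
  rotation_invariance_vanishing_general μ hrot p q hdeg
end
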